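/- arXiv:2110.15777 — 3 statements merged into one kernel-verified Lean document; each statement's English description precedes it below -/
import Mathlib

section
/- Let μ₀, μ₁ ∈ ℝⁿ, W a linear map ℝⁿ → ℝᵐ, P₀, P₁ ∈ [0,1], and σ₀, σ₁ > 0. Define M = |P₀ + P₁ − 1| · ‖W(μ₀ − μ₁)‖ and suppose S₀² = P₀²σ₀² + (1−P₀)²σ₁² and S₁² = P₁²σ₁² + (1−P₁)²σ₀². If M > 0, then (S₀ + S₁)/M ≥ 2σ₀σ₁ / (|P₀ + P₁ − 1| · √(σ₀² + σ₁²) · ‖W(μ₀ − μ₁)‖). -/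
theorem stmt_3 (n m : ℕ) (μ0 μ1 : EuclideanSpace ℝ (Fin n))
    (W : EuclideanSpace ℝ (Fin n) →ₗ[ℝ] EuclideanSpace ℝ (Fin m))
    (P0 P1 σ0 σ1 S0 S1 : ℝ)
    (hP0 : P0 ∈ Set.Icc (0:ℝ) 1) (hP1 : P1 ∈ Set.Icc (0:ℝ) 1)
    (hσ0 : 0 < σ0) (hσ1 : 0 < σ1) (hS0 : 0 ≤ S0) (hS1 : 0 ≤ S1)
    (hS0sq : S0 ^ 2 = P0 ^ 2 * σ0 ^ 2 + (1 - P0) ^ 2 * σ1 ^ 2)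
    (hS1sq : S1 ^ 2 = P1 ^ 2 * σ1 ^ 2 + (1 - P1) ^ 2 * σ0 ^ 2)
    (hM : 0 < |P0 + P1 - 1| * ‖W (μ0 - μ1)‖) :
    2 * σ0 * σ1 / (|P0 + P1 - 1| * Real.sqrt (σ0 ^ 2 + σ1 ^ 2) * ‖W (μ0 - μ1)‖)
      ≤ (S0 + S1) / (|P0 + P1 - 1| * ‖W (μ0 - μ1)‖) := by
  set s := Real.sqrt (σ0 ^ 2 + σ1 ^ 2) with hsdef
  have hs : 0 < s := Real.sqrt_pos.mpr (by positivity)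
  have hss : s ^ 2 = σ0 ^ 2 + σ1 ^ 2 := Real.sq_sqrt (by positivity)
  have h0 : σ0 * σ1 ≤ S0 * s := by
    have key : (σ0 * σ1) ^ 2 ≤ (S0 * s) ^ 2 := by
      have := sq_nonneg (P0 * (σ0 ^ 2 + σ1 ^ 2) - σ1 ^ 2)
      nlinarith [sq_nonneg σ0, sq_nonneg σ1]
    nlinarith [mul_pos hσ0 hσ1, mul_nonneg hS0 hs.le]
  have h1 : σ0 * σ1 ≤ S1 * s := by
    have key : (σ0 * σ1) ^ 2 ≤ (S1 * s) ^ 2 := by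
      have := sq_nonneg (P1 * (σ0 ^ 2 + σ1 ^ 2) - σ0 ^ 2)
      nlinarith [sq_nonneg σ0, sq_nonneg σ1]
    nlinarith [mul_pos hσ0 hσ1, mul_nonneg hS1 hs.le]
  have hsum : 2 * σ0 * σ1 / s ≤ S0 + S1 := by
    rw [div_le_iff₀ hs]; nlinarith
  have hrw : 2 * σ0 * σ1 / (|P0 + P1 - 1| * s * ‖W (μ0 - μ1)‖)
      = (2 * σ0 * σ1 / s) / (|P0 + P1 - 1| * ‖W (μ0 - μ1)‖) := by
    field_simp
  rw [hrw]
  gcongr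
end

section
/- With the notation of the bi-kernel inter-class difference ν₀ − ν₁ = (P₁ Ws + (P₀−1) Wd)(μ₀−μ₁) + (P₀−P₁)(Ws−Wd)μ₀: suppose μ₀ = μ₁ = μ ≠ 0 and P₀ ≠ P₁. Then there exist linear maps Ws, Wd with ‖ν₀ − ν₁‖ > 0. In particular, taking Ws = I and Wd = 0 gives ‖ν₀ − ν₁‖ = |P₀ − P₁| · ‖μ‖ > 0. -/
lemma key (n : ℕ) (μ : EuclideanSpace ℝ (Fin n)) (P0 P1 : ℝ) :
    ‖(P0 • (LinearMap.id : EuclideanSpace ℝ (Fin n) →ₗ[ℝ] EuclideanSpace ℝ (Fin n)) μ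
        + (1 - P0) • (0 : EuclideanSpace ℝ (Fin n) →ₗ[ℝ] EuclideanSpace ℝ (Fin n)) μ)
      - (P1 • (LinearMap.id : EuclideanSpace ℝ (Fin n) →ₗ[ℝ] EuclideanSpace ℝ (Fin n)) μ
        + (1 - P1) • (0 : EuclideanSpace ℝ (Fin n) →ₗ[ℝ] EuclideanSpace ℝ (Fin n)) μ)‖
      = |P0 - P1| * ‖μ‖ := by
  simp only [LinearMap.id_apply, LinearMap.zero_apply, smul_zero, add_zero]
  rw [← sub_smul, norm_smul, Real.norm_eq_abs]

theorem stmt_7 (n : ℕ) (μ : EuclideanSpace ℝ (Fin n)) (hμ : μ ≠ 0)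
    (P0 P1 : ℝ) (hP0 : P0 ∈ Set.Icc (0:ℝ) 1) (hP1 : P1 ∈ Set.Icc (0:ℝ) 1)
    (hP : P0 ≠ P1) :
    (∃ Ws Wd : EuclideanSpace ℝ (Fin n) →ₗ[ℝ] EuclideanSpace ℝ (Fin n),
      0 < ‖(P0 • Ws μ + (1 - P0) • Wd μ) - (P1 • Ws μ + (1 - P1) • Wd μ)‖) ∧
    ‖(P0 • (LinearMap.id : EuclideanSpace ℝ (Fin n) →ₗ[ℝ] EuclideanSpace ℝ (Fin n)) μ
        + (1 - P0) • (0 : EuclideanSpace ℝ (Fin n) →ₗ[ℝ] EuclideanSpace ℝ (Fin n)) μ)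
      - (P1 • (LinearMap.id : EuclideanSpace ℝ (Fin n) →ₗ[ℝ] EuclideanSpace ℝ (Fin n)) μ
        + (1 - P1) • (0 : EuclideanSpace ℝ (Fin n) →ₗ[ℝ] EuclideanSpace ℝ (Fin n)) μ)‖
      = |P0 - P1| * ‖μ‖ ∧ 0 < |P0 - P1| * ‖μ‖ := by
  have hpos : 0 < |P0 - P1| * ‖μ‖ :=
    mul_pos (abs_pos.2 (sub_ne_zero.2 hP)) (norm_pos_iff.2 hμ)
  refine ⟨⟨LinearMap.id, 0, ?_⟩, key n μ P0 P1, hpos⟩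
  rw [key n μ P0 P1]; exact hpos
end

section
/- With the single-kernel GCN, if μ₀ = μ₁ then the inter-class separation M₀,₁ = |P₀+P₁−1|·‖W(μ₀−μ₁)‖ = 0 for every kernel W; whereas with the bi-kernel design and P₀ ≠ P₁, μ₀ ≠ 0, there is a choice of (Ws, Wd) making the bi-kernel inter-class separation strictly positive. Hence the bi-kernel model is strictly more discriminative than any single-kernel GCN in this regime. -/
theorem stmt_8 (n m : ℕ) (μ0 μ1 : EuclideanSpace ℝ (Fin n))
    (P0 P1 : ℝ) (hP0 : P0 ∈ Set.Icc (0:ℝ) 1) (hP1 : P1 ∈ Set.Icc (0:ℝ) 1)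
    (hμeq : μ0 = μ1) (hP : P0 ≠ P1) (hμ0 : μ0 ≠ 0) :
    (∀ W : EuclideanSpace ℝ (Fin n) →ₗ[ℝ] EuclideanSpace ℝ (Fin m),
      |P0 + P1 - 1| * ‖W (μ0 - μ1)‖ = 0) ∧
    (∃ Ws Wd : EuclideanSpace ℝ (Fin n) →ₗ[ℝ] EuclideanSpace ℝ (Fin n),
      0 < ‖(P0 • Ws μ0 + (1 - P0) • Wd μ1) - (P1 • Ws μ1 + (1 - P1) • Wd μ0)‖) := by
  constructor
  · intro W
    simp [hμeq]
  · refine ⟨LinearMap.id, 0, ?_⟩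
    have h : (P0 • (LinearMap.id (R := ℝ)) μ0 + (1 - P0) • ((0 : EuclideanSpace ℝ (Fin n) →ₗ[ℝ] EuclideanSpace ℝ (Fin n)) μ1)) - (P1 • (LinearMap.id (R := ℝ)) μ1 + (1 - P1) • ((0 : EuclideanSpace ℝ (Fin n) →ₗ[ℝ] EuclideanSpace ℝ (Fin n)) μ0)) = (P0 - P1) • μ0 := by
      simp [← hμeq, sub_smul]
    rw [h, norm_pos_iff]
    exact smul_ne_zero (sub_ne_zero.mpr hP) hμ0
end
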